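/- arXiv:2006.09927 — 5 statements merged into one kernel-verified Lean document; each statement's English description precedes it below -/
import Mathlib

section
/- In the complete graph K_n with root vertex r, the star cycle family rooted at r is tree-robust: for every spanning tree T of K_n there exists an ordering π of the binom(n-1,2) star triangles such that for every index i ≥ 2, the triangle C_{π(i)} contains an edge that is not an edge of T and is not an edge of any earlier triangle C_{π(1)}, …, C_{π(i-1)}. -/
open Finset

/-- The star triangle rooted at `r` associated to an unordered pair `{j, k}`:
the edge set `{ {j,k}, {r,j}, {r,k} }` of the triangle through `r`, `j`, `k`. -/
def starTriangle {V : Type*} [DecidableEq V] (r : V) : Sym2 V → Finset (Sym2 V) :=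
  Sym2.lift ⟨fun j k => {s(j, k), s(r, j), s(r, k)}, by
    intro j k
    show ({s(j,k), s(r,j), s(r,k)} : Finset (Sym2 V)) = {s(k,j), s(r,k), s(r,j)}
    rw [Sym2.eq_swap]
    simp [Finset.pair_comm]⟩

/-- The index set of the star cycle family rooted at `r`: all unordered pairs
`{j, k}` of distinct vertices avoiding the root `r`. -/
def starPairs (V : Type*) [Fintype V] [DecidableEq V] (r : V) : Finset (Sym2 V) :=
  Finset.univ.filter (fun e : Sym2 V => ¬ e.IsDiag ∧ r ∉ e)

/-! Hang the tree `T` from the root `r`. The triangle of a tree edge `{a, b}`, `b` the parent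
of `a`, has the new edge `{r, a}`: it is not in `T` because the parent of `a` is `b ≠ r`, and every
other star triangle containing it belongs to a pair `{a, c}` where either `c` is a child of `a` or
`{a, c}` is not a tree edge. The triangle of a non-tree pair `{j, k}` has the new edge `{j, k}`,
which lies in no other star triangle. So it suffices to sort the tree edges by the depth of their
lower endpoint and to put the non-tree pairs (depth `⊤`) last. -/

theorem exists_equiv_fin_forall_exists_fresh_mem {ι E α : Type*} [Fintype ι] [LinearOrder α]
    {n : ℕ} (hn : Fintype.card ι = n) (C : ι → Finset E) (w : ι → α) (p : E → Prop)
    (h : ∀ i, ∃ x ∈ C i, p x ∧ ∀ j, j ≠ i → x ∈ C j → w i < w j) :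
    ∃ π : Fin n ≃ ι, ∀ i, ∃ x ∈ C (π i), p x ∧ ∀ j, j < i → x ∉ C (π j) := by
  let e := (Fintype.equivFinOfCardEq hn).symm
  refine ⟨(Tuple.sort (w ∘ e)).trans e, fun i => ?_⟩
  obtain ⟨x, hxC, hpx, hlater⟩ := h ((Tuple.sort (w ∘ e)).trans e i)
  refine ⟨x, hxC, hpx, fun j hji hxj => ?_⟩
  have hne : (Tuple.sort (w ∘ e)).trans e j ≠ (Tuple.sort (w ∘ e)).trans e i :=
    fun heq => hji.ne (Equiv.injective _ heq)
  exact (hlater _ hne hxj).not_ge (Tuple.monotone_sort (w ∘ e) hji.le)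

namespace SimpleGraph

variable {V : Type*} {G : SimpleGraph V}

theorem IsAcyclic.eq_penultimate_of_adj_of_dist_add_one {u a b : V} (hG : G.IsAcyclic)
    {p : G.Walk u a} (hp : p.IsPath) (hab : G.Adj a b) (hub : G.Reachable u b)
    (hdist : G.dist u a = G.dist u b + 1) : b = p.penultimate := by
  classical
  obtain ⟨q, hq, hql⟩ := hub.exists_path_of_dist
  have ha : a ∉ q.support := fun ha => by
    have := (dist_le (q.takeUntil a ha)).trans (q.length_takeUntil_le_length ha)
    omega
  exact hG.eq_penultimate_of_adj_end hp hab
    (hG.mem_support_of_ne_mem_support_of_adj_of_isPath hp hq hab ha)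

theorem IsTree.eq_of_adj_of_dist_add_one (hG : G.IsTree) (u : V) {a b c : V}
    (hab : G.Adj a b) (hac : G.Adj a c) (hb : G.dist u a = G.dist u b + 1)
    (hc : G.dist u a = G.dist u c + 1) : b = c := by
  obtain ⟨p, hp, -⟩ := hG.existsUnique_path u a
  rw [hG.isAcyclic.eq_penultimate_of_adj_of_dist_add_one hp hab (hG.connected u b) hb,
    hG.isAcyclic.eq_penultimate_of_adj_of_dist_add_one hp hac (hG.connected u c) hc]

end SimpleGraph

section StarTriangle

variable {V : Type*} [DecidableEq V]

theorem mem_starTriangle {r j k : V} {f : Sym2 V} :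
    f ∈ starTriangle r s(j, k) ↔ f = s(j, k) ∨ f = s(r, j) ∨ f = s(r, k) := by
  simp [starTriangle]

theorem eq_of_mem_starTriangle {r : V} {e f : Sym2 V} (hf : r ∉ f) (h : f ∈ starTriangle r e) :
    f = e := by
  induction e using Sym2.inductionOn with
  | hf j k =>
    rcases mem_starTriangle.1 h with h | rfl | rfl
    · exact h
    all_goals simp at hf

theorem mem_of_mem_starTriangle {r a : V} {e : Sym2 V} (he : r ∉ e)
    (h : s(r, a) ∈ starTriangle r e) : a ∈ e := by
  induction e using Sym2.inductionOn with
  | hf j k =>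
    rcases mem_starTriangle.1 h with h | h | h
    · exact absurd (h ▸ Sym2.mem_mk_left r a) he
    · simp [Sym2.congr_right.1 h]
    · simp [Sym2.congr_right.1 h]

end StarTriangle

section TreeEdgeDepth

variable {V : Type*} {T : SimpleGraph V} {r : V}

open Classical in
noncomputable def treeEdgeDepth (T : SimpleGraph V) (r : V) (e : Sym2 V) : WithTop ℕ :=
  if e ∈ T.edgeSet then ((e.map (T.dist r)).sup : ℕ) else ⊤

theorem treeEdgeDepth_of_adj {a b : V} (hab : T.Adj a b) (hdist : T.dist r a = T.dist r b + 1) :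
    treeEdgeDepth T r s(a, b) = T.dist r a := by
  have hab' : s(a, b) ∈ T.edgeSet := hab
  simp [treeEdgeDepth, hab', hdist]

variable [DecidableEq V]

theorem exists_fresh_mem_starTriangle_of_adj (hT : T.IsTree) {a b : V} (hab : T.Adj a b)
    (hdist : T.dist r a = T.dist r b + 1) (hbr : b ≠ r) :
    ∃ f ∈ starTriangle r s(a, b), f ∉ T.edgeSet ∧
      ∀ e', r ∉ e' → e' ≠ s(a, b) → f ∈ starTriangle r e' →
        treeEdgeDepth T r s(a, b) < treeEdgeDepth T r e' := by
  refine ⟨s(r, a), mem_starTriangle.2 (Or.inr (Or.inl rfl)), fun hra => ?_, ?_⟩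
  · have hra : T.Adj a r := (T.mem_edgeSet.1 hra).symm
    exact hbr (hT.eq_of_adj_of_dist_add_one r hab hra hdist (by
      rw [SimpleGraph.dist_self, SimpleGraph.dist_eq_one_iff_adj]; exact hra.symm))
  intro e' hr' hne h
  obtain ⟨c, rfl⟩ := (Sym2.mem_iff_exists.1 (mem_of_mem_starTriangle hr' h))
  rw [treeEdgeDepth_of_adj hab hdist]
  by_cases hac : T.Adj a c
  · rcases hT.dist_eq_dist_add_one_of_adj r hac with hc | hc
    · exact absurd (by rw [hT.eq_of_adj_of_dist_add_one r hab hac hdist hc]) hne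
    · rw [← Sym2.eq_swap, treeEdgeDepth_of_adj hac.symm hc, hc]
      exact_mod_cast Nat.lt_succ_self _
  · simp [treeEdgeDepth, hac]

theorem exists_fresh_mem_starTriangle (hT : T.IsTree) {e : Sym2 V} (hr : r ∉ e) :
    ∃ f ∈ starTriangle r e, f ∉ T.edgeSet ∧
      ∀ e', r ∉ e' → e' ≠ e → f ∈ starTriangle r e' →
        treeEdgeDepth T r e < treeEdgeDepth T r e' := by
  by_cases he : e ∈ T.edgeSet
  · induction e using Sym2.inductionOn with
    | hf a b =>
      have hab : T.Adj a b := he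
      rcases hT.dist_eq_dist_add_one_of_adj r hab with h | h
      · exact exists_fresh_mem_starTriangle_of_adj hT hab h (by rintro rfl; simp at hr)
      · rw [Sym2.eq_swap]
        exact exists_fresh_mem_starTriangle_of_adj hT hab.symm h (by rintro rfl; simp at hr)
  · refine ⟨e, ?_, he, fun _ _ hne h => absurd (eq_of_mem_starTriangle hr h).symm hne⟩
    induction e using Sym2.inductionOn
    exact mem_starTriangle.2 (Or.inl rfl)

end TreeEdgeDepth

theorem starCycleFamily_treeRobust_general (V : Type*) [Fintype V] [DecidableEq V]
    (r : V)
    (T : SimpleGraph V) (hT : T.IsTree) :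
    ∃ π : Fin (starPairs V r).card ≃ {e : Sym2 V // e ∈ starPairs V r},
      ∀ i : Fin (starPairs V r).card, 0 < i.val →
        ∃ f ∈ starTriangle r (π i).val,
          f ∉ T.edgeSet ∧ ∀ j : Fin (starPairs V r).card, j < i →
            f ∉ starTriangle r (π j).val := by
  have hroot : ∀ e : {e : Sym2 V // e ∈ starPairs V r}, r ∉ e.val :=
    fun e => (Finset.mem_filter.1 e.2).2.2
  obtain ⟨π, hπ⟩ := exists_equiv_fin_forall_exists_fresh_mem (Fintype.card_coe _)
    (fun e => starTriangle r e.val) (fun e => treeEdgeDepth T r e.val) (· ∉ T.edgeSet)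
    fun e => by
      obtain ⟨f, hf, hfT, hlater⟩ := exists_fresh_mem_starTriangle hT (hroot e)
      exact ⟨f, hf, hfT, fun e' hne => hlater e'.val (hroot e') (Subtype.coe_ne_coe.2 hne)⟩
  exact ⟨π, fun i _ => hπ i⟩

/-- **The star cycle family of a complete graph is tree-robust.**
Let `V` be a finite vertex set with at least 3 vertices and `r ∈ V` a root.
For every spanning tree `T` of the complete graph on `V` (i.e. every tree on
the vertex set `V`), there is an ordering `π` of the star triangles rooted at
`r` such that every triangle except the first contains an edge that is neither
an edge of `T` nor an edge of any earlier triangle in the ordering. -/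
theorem starCycleFamily_treeRobust (V : Type*) [Fintype V] [DecidableEq V]
    (hV : 3 ≤ Fintype.card V) (r : V)
    (T : SimpleGraph V) (hT : T.IsTree) :
    ∃ π : Fin (starPairs V r).card ≃ {e : Sym2 V // e ∈ starPairs V r},
      ∀ i : Fin (starPairs V r).card, 0 < i.val →
        ∃ f ∈ starTriangle r (π i).val,
          f ∉ T.edgeSet ∧ ∀ j : Fin (starPairs V r).card, j < i →
            f ∉ starTriangle r (π j).val :=
  starCycleFamily_treeRobust_general V r T hT
end

section
/- For all probability mass functions b_i on X_i (i ∈ V), the mean-field free energy satisfies F_MF ≥ -ln Z; equivalently, the mean-field method yields the lower bound ln Z ≥ Σ_{a∈F} Σ_x (ln ψ_a(x)) · ∏_{i∈V} b_i(x_i) - Σ_{i∈V} Σ_{s∈X_i} b_i(s) · ln b_i(s) on the log-partition function. -/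
/-!
The mean-field bound is Gibbs' inequality for the product distribution `q(x) = Π_i b_i(x_i)`
against the unnormalised distribution `p̃ = Π_a ψ_a`:
`Σ_x q log p̃ - Σ_x q log q ≤ log Σ_x p̃`, which follows termwise from `log t ≤ t - 1`.
The energy term of `F_MF` is `Σ_x q log p̃` after exchanging sums, and since `log q` is
separable, `Σ_x q log q` splits into the sum of the single-variable entropy terms.
-/

open Finset

/-- The mean-field free energy of single-variable beliefs `b i : X i → ℝ`,
for a factor model with factors indexed by `A`, potentials `ψ a`:
`F_MF = -Σ_a Σ_x ln ψ_a(x) · Π_i b_i(x_i) + Σ_i Σ_s b_i(s) · ln b_i(s)`. -/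
noncomputable def meanFieldFreeEnergy {V : Type*} [Fintype V] [DecidableEq V]
    {X : V → Type*} [∀ i, Fintype (X i)]
    {A : Type*} [Fintype A]
    (ψ : A → ((i : V) → X i) → ℝ) (b : (i : V) → X i → ℝ) : ℝ :=
  -∑ a : A, ∑ x : (i : V) → X i, Real.log (ψ a x) * ∏ i : V, b i (x i)
    + ∑ i : V, ∑ s : X i, b i s * Real.log (b i s)

namespace Real

lemma mul_log_sub_mul_log_le {q t : ℝ} (hq : 0 ≤ q) (ht : 0 < t) :
    q * log t - q * log q ≤ t - q := by
  rcases hq.eq_or_lt with rfl | hq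
  · simpa using ht.le
  calc q * log t - q * log q = q * log (t / q) := by
        rw [log_div ht.ne' hq.ne']; ring
    _ ≤ q * (t / q - 1) := mul_le_mul_of_nonneg_left (log_le_sub_one_of_pos (by positivity)) hq.le
    _ = t - q := by field_simp

lemma sum_mul_log_sub_le_log_sum {ι : Type*} [Fintype ι] {q r : ι → ℝ}
    (hq : ∀ i, 0 ≤ q i) (hq1 : ∑ i, q i = 1) (hr : ∀ i, 0 < r i) :
    ∑ i, q i * log (r i) - ∑ i, q i * log (q i) ≤ log (∑ i, r i) := by
  have : Nonempty ι := by
    by_contra h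
    simp [not_nonempty_iff.mp h] at hq1
  set Z := ∑ i, r i
  have hZ : 0 < Z := sum_pos (fun i _ => hr i) univ_nonempty
  have hterm : ∀ i, q i * log (r i / Z) - q i * log (q i) ≤ r i / Z - q i := fun i =>
    mul_log_sub_mul_log_le (hq i) (by have := hr i; positivity)
  have hrZ : ∑ i, r i / Z = 1 := by rw [← sum_div, div_self hZ.ne']
  have hsum := sum_le_sum fun i (_ : i ∈ univ) => hterm i
  simp only [log_div (hr _).ne' hZ.ne', mul_sub, sum_sub_distrib, ← sum_mul, hq1, hrZ] at hsum
  linarith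

end Real

section ProductDistribution

variable {ι : Type*} [Fintype ι] [DecidableEq ι] {κ : ι → Type*} [∀ i, Fintype (κ i)]
  {p : ∀ i, κ i → ℝ}

lemma sum_prod_eq_one (hp : ∀ i, ∑ s, p i s = 1) :
    ∑ x : ∀ i, κ i, ∏ i, p i (x i) = 1 := by
  simp [← Fintype.prod_sum, hp]

lemma sum_prod_mul_apply (hp : ∀ i, ∑ s, p i s = 1) (g : ∀ i, κ i → ℝ) (j : ι) :
    ∑ x : ∀ i, κ i, (∏ i, p i (x i)) * g j (x j) = ∑ s, p j s * g j s := by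
  have hfactor : ∀ x : ∀ i, κ i,
      (∏ i, p i (x i)) * g j (x j) = ∏ i, p i (x i) * if i = j then g i (x i) else 1 := by
    intro x
    rw [prod_mul_distrib, prod_ite_eq' univ j, if_pos (mem_univ j)]
  have hsum : ∀ i, ∑ s, p i s * (if i = j then g i s else 1) =
      if i = j then ∑ s, p j s * g j s else 1 := by
    intro i
    split_ifs with h
    · subst h; rfl
    · simp [hp]
  rw [sum_congr rfl fun x _ => hfactor x,
    ← Fintype.prod_sum fun i s => p i s * if i = j then g i s else 1]
  simp only [hsum]
  rw [prod_ite_eq' univ j, if_pos (mem_univ j)]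

lemma sum_prod_mul_sum_apply (hp : ∀ i, ∑ s, p i s = 1) (g : ∀ i, κ i → ℝ) :
    ∑ x : ∀ i, κ i, (∏ i, p i (x i)) * ∑ j, g j (x j) = ∑ j, ∑ s, p j s * g j s := by
  simp only [mul_sum]
  rw [sum_comm]
  exact sum_congr rfl fun j _ => sum_prod_mul_apply hp g j

lemma sum_prod_mul_log_prod (hp : ∀ i, ∑ s, p i s = 1) :
    ∑ x : ∀ i, κ i, (∏ i, p i (x i)) * Real.log (∏ i, p i (x i)) =
      ∑ i, ∑ s, p i s * Real.log (p i s) := by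
  rw [← sum_prod_mul_sum_apply hp fun i s => Real.log (p i s)]
  refine sum_congr rfl fun x _ => ?_
  by_cases hx : ∏ i, p i (x i) = 0
  · simp [hx]
  · rw [Real.log_prod fun i _ => prod_ne_zero_iff.mp hx i (mem_univ i)]

end ProductDistribution

theorem mean_field_lower_bound_general (V : Type*) [Fintype V] [DecidableEq V]
    (X : V → Type*) [∀ i, Fintype (X i)]
    (A : Type*) [Fintype A]
    (ψ : A → ((i : V) → X i) → ℝ) (hψ : ∀ a x, 0 < ψ a x)
    (b : (i : V) → X i → ℝ) (hb0 : ∀ i s, 0 ≤ b i s) (hb1 : ∀ i, ∑ s, b i s = 1) :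
    -Real.log (∑ x : (i : V) → X i, ∏ a : A, ψ a x) ≤ meanFieldFreeEnergy ψ b := by
  have henergy : ∑ a, ∑ x : (i : V) → X i, Real.log (ψ a x) * ∏ i, b i (x i) =
      ∑ x : (i : V) → X i, (∏ i, b i (x i)) * Real.log (∏ a, ψ a x) := by
    rw [sum_comm]
    refine sum_congr rfl fun x _ => ?_
    rw [Real.log_prod fun a _ => (hψ a x).ne', mul_sum]
    exact sum_congr rfl fun a _ => mul_comm _ _
  have hgibbs := Real.sum_mul_log_sub_le_log_sum (r := fun x => ∏ a, ψ a x)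
    (fun x => prod_nonneg fun i _ => hb0 i (x i)) (sum_prod_eq_one hb1)
    (fun x => prod_pos fun a _ => hψ a x)
  rw [meanFieldFreeEnergy, henergy, ← sum_prod_mul_log_prod hb1]
  linarith

/-- **Mean-field lower bound on the log-partition function.**
For all probability mass functions `b_i` on `X_i`, the mean-field free energy
satisfies `F_MF ≥ -ln Z` where `Z = Σ_x Π_a ψ_a(x)`; equivalently the
mean-field method lower-bounds `ln Z`. -/
theorem mean_field_lower_bound (V : Type*) [Fintype V] [DecidableEq V]
    (X : V → Type*) [∀ i, Fintype (X i)] [∀ i, Nonempty (X i)]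
    (A : Type*) [Fintype A] (S : A → Finset V)
    (ψ : A → ((i : V) → X i) → ℝ) (hψ : ∀ a x, 0 < ψ a x)
    (hscope : ∀ a x y, (∀ i ∈ S a, x i = y i) → ψ a x = ψ a y)
    (b : (i : V) → X i → ℝ) (hb0 : ∀ i s, 0 ≤ b i s) (hb1 : ∀ i, ∑ s, b i s = 1) :
    -Real.log (∑ x : (i : V) → X i, ∏ a : A, ψ a x) ≤ meanFieldFreeEnergy ψ b :=
  mean_field_lower_bound_general V X A ψ hψ b hb0 hb1
end

section
/- Fix i ∈ V and strictly positive probability mass functions b_j on X_j for all j ≠ i, and define m_i(s) = Σ_{a∈F} Σ_{x : x_i = s} (ln ψ_a(x)) · ∏_{j≠i} b_j(x_j) for s ∈ X_i. Then over all probability mass functions q on X_i, the mean-field free energy F_MF with b_i := q (and the other b_j fixed) is minimized at q*(s) = exp(m_i(s)) / Σ_{t∈X_i} exp(m_i(t)), and q* is the unique minimizer; i.e., the coordinate-wise minimizer of the mean-field free energy is given by the mean-field update rule ln b_i(x_i) ∝ Σ_a Σ_{x_a∖x_i} ln ψ_a(x_a) ∏_{j} b_j(x_j). -/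
/-!
Only the `i`-th belief varies, so the energy term is linear in `q`, namely `-Σ_s q s · m s`, and
the entropy terms of the other coordinates are constant. Up to that constant the free energy is
`Σ_s (q s · ln q s - q s · m s) = KL(q ‖ q*) - ln Σ_t exp (m t)`, where, since `q` and `q*` have
the same mass, `KL(q ‖ q*) = Σ_s q* s · klFun (q s / q* s)` with `klFun x = x ln x + 1 - x`.
This is Gibbs' inequality: `klFun ≥ 0` on `[0, ∞)` and vanishes only at `1`, so `q*` is the
unique minimizer.
-/

open Finset

open Real InformationTheory

noncomputable section

lemma mul_klFun_div {p : ℝ} (hp : 0 < p) (q : ℝ) :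
    p * klFun (q / p) = q * log q - q * log p + p - q := by
  have hlog : q * log (q / p) = q * log q - q * log p := by
    rcases eq_or_ne q 0 with rfl | hq
    · simp
    · rw [log_div hq hp.ne']; ring
  rw [klFun_apply, ← hlog]
  field_simp

section Gibbs

variable {ι : Type*} [Fintype ι]

def softmax (m : ι → ℝ) (s : ι) : ℝ := exp (m s) / ∑ t, exp (m t)

def gibbsFreeEnergy (m q : ι → ℝ) : ℝ := ∑ s, (q s * log (q s) - q s * m s)

variable [Nonempty ι] (m : ι → ℝ)

lemma sum_exp_pos : 0 < ∑ t, exp (m t) :=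
  sum_pos (fun t _ => exp_pos (m t)) univ_nonempty

lemma softmax_pos (s : ι) : 0 < softmax m s :=
  div_pos (exp_pos _) (sum_exp_pos m)

lemma sum_softmax : ∑ s, softmax m s = 1 := by
  simp_rw [softmax, ← sum_div]
  exact div_self (sum_exp_pos m).ne'

lemma log_softmax (s : ι) : log (softmax m s) = m s - log (∑ t, exp (m t)) := by
  rw [softmax, log_div (exp_ne_zero _) (sum_exp_pos m).ne', log_exp]

lemma gibbsFreeEnergy_eq_sum_klFun_sub {q : ι → ℝ} (hq1 : ∑ s, q s = 1) :
    gibbsFreeEnergy m q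
      = ∑ s, softmax m s * klFun (q s / softmax m s) - log (∑ t, exp (m t)) := by
  simp_rw [mul_klFun_div (softmax_pos m _), log_softmax]
  simp only [gibbsFreeEnergy, sum_sub_distrib, sum_add_distrib, mul_sub, ← sum_mul, hq1,
    sum_softmax]
  ring

lemma gibbsFreeEnergy_softmax :
    gibbsFreeEnergy m (softmax m) = -log (∑ t, exp (m t)) := by
  rw [gibbsFreeEnergy_eq_sum_klFun_sub m (sum_softmax m)]
  simp [div_self (softmax_pos m _).ne', klFun_one]

variable {m} {q : ι → ℝ}

lemma softmax_mul_klFun_div_nonneg (hq0 : ∀ s, 0 ≤ q s) (s : ι) :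
    0 ≤ softmax m s * klFun (q s / softmax m s) :=
  mul_nonneg (softmax_pos m s).le (klFun_nonneg (div_nonneg (hq0 s) (softmax_pos m s).le))

variable (hq0 : ∀ s, 0 ≤ q s) (hq1 : ∑ s, q s = 1)
include hq0 hq1

theorem gibbsFreeEnergy_softmax_le : gibbsFreeEnergy m (softmax m) ≤ gibbsFreeEnergy m q := by
  rw [gibbsFreeEnergy_softmax, gibbsFreeEnergy_eq_sum_klFun_sub m hq1, le_sub_iff_add_le,
    neg_add_cancel]
  exact sum_nonneg fun s _ => softmax_mul_klFun_div_nonneg hq0 s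

theorem eq_softmax_of_gibbsFreeEnergy_eq
    (h : gibbsFreeEnergy m q = gibbsFreeEnergy m (softmax m)) : q = softmax m := by
  rw [gibbsFreeEnergy_softmax, gibbsFreeEnergy_eq_sum_klFun_sub m hq1, sub_eq_neg_self,
    sum_eq_zero_iff_of_nonneg fun s _ => softmax_mul_klFun_div_nonneg hq0 s] at h
  funext s
  have hs := h s (mem_univ s)
  rw [mul_eq_zero, or_iff_right (softmax_pos m s).ne',
    klFun_eq_zero_iff (div_nonneg (hq0 s) (softmax_pos m s).le),
    div_eq_one_iff_eq (softmax_pos m s).ne'] at hs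
  exact hs

end Gibbs

section MeanField

variable {V : Type*} [Fintype V] [DecidableEq V] {X : V → Type*} [∀ i, Fintype (X i)]
  {A : Type*} [Fintype A]

def meanFieldLogPotential [∀ i, DecidableEq (X i)] (ψ : A → ((i : V) → X i) → ℝ)
    (b : (j : V) → X j → ℝ) (i : V) (s : X i) : ℝ :=
  ∑ a : A, ∑ x ∈ univ.filter (fun x : (j : V) → X j => x i = s),
    log (ψ a x) * ∏ j ∈ univ.erase i, b j (x j)

omit [∀ i, Fintype (X i)] in
lemma prod_update_apply (b : (j : V) → X j → ℝ) (i : V) (r : X i → ℝ) (x : (j : V) → X j) :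
    ∏ j, Function.update b i r j (x j) = r (x i) * ∏ j ∈ univ.erase i, b j (x j) := by
  simp_rw [Function.apply_update (fun j (f : X j → ℝ) => f (x j)) b i r,
    prod_update_of_mem (mem_univ i), sdiff_singleton_eq_erase]

lemma sum_log_mul_prod_update [∀ i, DecidableEq (X i)] (ψ : A → ((i : V) → X i) → ℝ)
    (b : (j : V) → X j → ℝ) (i : V) (r : X i → ℝ) :
    ∑ a, ∑ x : (j : V) → X j, log (ψ a x) * ∏ j, Function.update b i r j (x j)
      = ∑ s, r s * meanFieldLogPotential ψ b i s := by
  simp_rw [meanFieldLogPotential, mul_sum, prod_update_apply]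
  conv_rhs => rw [sum_comm]
  refine sum_congr rfl fun a _ => ?_
  rw [← sum_fiberwise univ (fun x : (j : V) → X j => x i)]
  refine sum_congr rfl fun s _ => sum_congr rfl fun x hx => ?_
  rw [(mem_filter.mp hx).2]
  ring

lemma meanFieldFreeEnergy_update [∀ i, DecidableEq (X i)] (ψ : A → ((i : V) → X i) → ℝ)
    (b : (j : V) → X j → ℝ) (i : V) (r : X i → ℝ) :
    meanFieldFreeEnergy ψ (Function.update b i r)
      = gibbsFreeEnergy (meanFieldLogPotential ψ b i) r
        + ∑ j ∈ univ.erase i, ∑ s, b j s * log (b j s) := by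
  have hentropy : ∑ j, ∑ s, Function.update b i r j s * log (Function.update b i r j s)
      = ∑ s, r s * log (r s) + ∑ j ∈ univ.erase i, ∑ s, b j s * log (b j s) := by
    rw [← add_sum_erase univ _ (mem_univ i), Function.update_self]
    congr 1
    exact sum_congr rfl fun j hj => by rw [Function.update_of_ne (ne_of_mem_erase hj)]
  rw [meanFieldFreeEnergy, sum_log_mul_prod_update, hentropy, gibbsFreeEnergy, sum_sub_distrib]
  ring

end MeanField

end

theorem mean_field_update_minimizer_general (V : Type*) [Fintype V] [DecidableEq V]
    (X : V → Type*) [∀ i, Fintype (X i)] [∀ i, Nonempty (X i)] [∀ i, DecidableEq (X i)]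
    (A : Type*) [Fintype A]
    (ψ : A → ((i : V) → X i) → ℝ)
    (i : V) (b : (j : V) → X j → ℝ)
    (m : X i → ℝ)
    (hm : ∀ s, m s = ∑ a : A, ∑ x ∈ Finset.univ.filter (fun x : (j : V) → X j => x i = s),
      Real.log (ψ a x) * ∏ j ∈ Finset.univ.erase i, b j (x j))
    (qstar : X i → ℝ)
    (hqstar : ∀ s, qstar s = Real.exp (m s) / ∑ t : X i, Real.exp (m t)) :
    ∀ q : X i → ℝ, (∀ s, 0 ≤ q s) → (∑ s, q s = 1) →
      meanFieldFreeEnergy ψ (Function.update b i qstar)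
          ≤ meanFieldFreeEnergy ψ (Function.update b i q) ∧
        (meanFieldFreeEnergy ψ (Function.update b i q)
            = meanFieldFreeEnergy ψ (Function.update b i qstar) → q = qstar) := by
  intro q hq0 hq1
  obtain rfl : m = meanFieldLogPotential ψ b i := funext hm
  obtain rfl : qstar = softmax (meanFieldLogPotential ψ b i) := funext hqstar
  simp only [meanFieldFreeEnergy_update, add_le_add_iff_right, add_left_inj]
  exact ⟨gibbsFreeEnergy_softmax_le hq0 hq1, eq_softmax_of_gibbsFreeEnergy_eq hq0 hq1⟩

/-- **Mean-field coordinate update rule.**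
Fix `i` and strictly positive pmfs `b j` for `j ≠ i`, and let
`m s = Σ_a Σ_{x : x i = s} ln ψ_a(x) · Π_{j ≠ i} b_j(x_j)`.
Then over all pmfs `q` on `X i`, the mean-field free energy with `b i := q`
(and the other coordinates fixed) is uniquely minimized at
`q*(s) = exp (m s) / Σ_t exp (m t)`. -/
theorem mean_field_update_minimizer (V : Type*) [Fintype V] [DecidableEq V]
    (X : V → Type*) [∀ i, Fintype (X i)] [∀ i, Nonempty (X i)] [∀ i, DecidableEq (X i)]
    (A : Type*) [Fintype A] (S : A → Finset V)
    (ψ : A → ((i : V) → X i) → ℝ) (hψ : ∀ a x, 0 < ψ a x)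
    (hscope : ∀ a x y, (∀ i ∈ S a, x i = y i) → ψ a x = ψ a y)
    (i : V) (b : (j : V) → X j → ℝ)
    (hb0 : ∀ j, j ≠ i → ∀ s, 0 < b j s) (hb1 : ∀ j, j ≠ i → ∑ s, b j s = 1)
    (m : X i → ℝ)
    (hm : ∀ s, m s = ∑ a : A, ∑ x ∈ Finset.univ.filter (fun x : (j : V) → X j => x i = s),
      Real.log (ψ a x) * ∏ j ∈ Finset.univ.erase i, b j (x j))
    (qstar : X i → ℝ)
    (hqstar : ∀ s, qstar s = Real.exp (m s) / ∑ t : X i, Real.exp (m t)) :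
    ∀ q : X i → ℝ, (∀ s, 0 ≤ q s) → (∑ s, q s = 1) →
      meanFieldFreeEnergy ψ (Function.update b i qstar)
          ≤ meanFieldFreeEnergy ψ (Function.update b i q) ∧
        (meanFieldFreeEnergy ψ (Function.update b i q)
            = meanFieldFreeEnergy ψ (Function.update b i qstar) → q = qstar) :=
  mean_field_update_minimizer_general V X A ψ i b m hm qstar hqstar
end

section
/- Given a consistent belief system on the tree T, define b(x) = ( ∏_{{i,j}∈E(T)} b_{ij}(x_i, x_j) ) · ∏_{i∈V} b_i(x_i)^{1 - deg(i)} for x ∈ ∏_{i∈V} X_i. Then b is a probability mass function (b(x) > 0 for all x and Σ_x b(x) = 1), its single-variable marginals are the node beliefs (Σ_{x : x_i = s} b(x) = b_i(s) for every i ∈ V and s ∈ X_i), and its pairwise marginals on edges are the edge beliefs (Σ_{x : x_i = s, x_j = t} b(x) = b_{ij}(s,t) for every edge {i,j} ∈ E(T), s ∈ X_i, t ∈ X_j). -/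
open Finset

/-- The tree-factorized distribution
`b(x) = (Π_{{i,j} ∈ E(T)} b_{ij}(x_i, x_j)) · Π_i b_i(x_i)^{1 - deg(i)}`
built from node beliefs `b1` and (symmetric) pairwise beliefs `b2`. -/
noncomputable def treeFactorized {V : Type*} [Fintype V] [DecidableEq V]
    {X : V → Type*} (T : SimpleGraph V) [DecidableRel T.Adj]
    (b1 : (i : V) → X i → ℝ) (b2 : (i j : V) → X i → X j → ℝ)
    (hsym : ∀ i j s t, b2 i j s t = b2 j i t s)
    (x : (i : V) → X i) : ℝ :=
  (∏ e ∈ T.edgeFinset,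
      Sym2.lift ⟨fun i j => b2 i j (x i) (x j), fun i j => hsym i j (x i) (x j)⟩ e)
    * ∏ i : V, b1 i (x i) ^ ((1 : ℤ) - T.degree i)

/-!
In terms of the ratios `ρᵢⱼ = bᵢⱼ / (bᵢ bⱼ)` the distribution is
`b(x) = ∏ᵢ bᵢ(xᵢ) · ∏_{ij ∈ E} ρᵢⱼ(xᵢ, xⱼ)`, and the claim holds for every forest with consistent
beliefs on its edges, by induction on the number of edges. Delete the edge from a leaf `ℓ` to its
neighbour `p`. In the smaller forest `ℓ` is isolated, so there `x_ℓ` is independent of the other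
coordinates with law `b_ℓ`, and averaging the deleted factor over it gives
`∑ᵤ b_ℓ(u) ρ_ℓp(u, t) = 1` by consistency at `p`. Hence the law of the coordinates other than `x_ℓ`
is unchanged, while the pair `(x_ℓ, x_p)` gets the law `b_p(t) · b_ℓp(s, t) / b_p(t) = b_ℓp(s, t)`
from the node marginal at `p`.
-/

section PiSums

variable {V : Type*} [Fintype V] [DecidableEq V] {X : V → Type*} [∀ i, Fintype (X i)]

theorem Fintype.sum_eq_sum_of_sum_update_eq {M : Type*} [AddCommMonoid M] (ℓ : V)
    {f g : ((i : V) → X i) → M}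
    (h : ∀ x, ∑ v, f (Function.update x ℓ v) = ∑ v, g (Function.update x ℓ v)) :
    ∑ x, f x = ∑ x, g x := by
  cases isEmpty_or_nonempty (X ℓ) with
  | inl hℓ =>
    have : IsEmpty ((i : V) → X i) := ⟨fun x => isEmptyElim (x ℓ)⟩
    simp
  | inr hℓ =>
    obtain ⟨v₀⟩ := hℓ
    let e := Equiv.piSplitAt ℓ X
    have he : ∀ u y, e.symm (u, y) = Function.update (e.symm (v₀, y)) ℓ u := by
      intro u y
      rw [Equiv.symm_apply_eq]
      ext j
      · simp [e, Equiv.piSplitAt]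
      · show y j = Function.update _ ℓ u j
        rw [Function.update_of_ne j.2]
        simp [e, Equiv.piSplitAt, j.2]
    calc ∑ x, f x = ∑ y, ∑ u, f (e.symm (u, y)) := by
          rw [← e.symm.sum_comp, Fintype.sum_prod_type, Finset.sum_comm]
      _ = ∑ y, ∑ u, g (e.symm (u, y)) :=
          Finset.sum_congr rfl fun y _ => by simpa only [← he] using h (e.symm (v₀, y))
      _ = ∑ x, g x := by
          rw [← e.symm.sum_comp g, Fintype.sum_prod_type, Finset.sum_comm]

/-- Under the product weight `∏ i, b i (x i)` with `b ℓ` normalised, `x ℓ` is independent of the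
other coordinates and has law `b ℓ`. -/
theorem Fintype.sum_prod_mul_eq_sum_prod_mul_average {R : Type*} [CommSemiring R] (ℓ : V)
    (b : (i : V) → X i → R) (hb : ∑ u, b ℓ u = 1) (ψ : X ℓ → ((i : V) → X i) → R)
    (hψ : ∀ u x v, ψ u (Function.update x ℓ v) = ψ u x) :
    ∑ x, (∏ i, b i (x i)) * ψ (x ℓ) x = ∑ x, (∏ i, b i (x i)) * ∑ u, b ℓ u * ψ u x := by
  refine Fintype.sum_eq_sum_of_sum_update_eq ℓ fun x => ?_
  set r := ∏ i ∈ Finset.univ \ {ℓ}, b i (x i)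
  have hprod : ∀ v, ∏ i, b i (Function.update x ℓ v i) = b ℓ v * r := fun v => by
    rw [Fintype.prod_congr _ _ fun i => Function.apply_update b x ℓ v i,
      Finset.prod_update_of_mem (Finset.mem_univ ℓ)]
  simp only [hprod, hψ, Function.update_self]
  calc ∑ v, b ℓ v * r * ψ v x = (∑ u, b ℓ u) * r * ∑ u, b ℓ u * ψ u x := by
        rw [hb, one_mul, Finset.mul_sum]
        exact Finset.sum_congr rfl fun v _ => by ring
    _ = ∑ v, b ℓ v * r * ∑ u, b ℓ u * ψ u x := by rw [Finset.sum_mul, Finset.sum_mul]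

end PiSums

namespace SimpleGraph

variable {V : Type*}

theorem not_deleteEdges_adj_of_forall_adj_eq [DecidableEq V] {G : SimpleGraph V} {ℓ p : V}
    (hleaf : ∀ w, G.Adj ℓ w → w = p) (w : V) : ¬(G.deleteEdges {s(ℓ, p)}).Adj ℓ w := by
  rw [deleteEdges_adj]
  rintro ⟨hw, hne⟩
  exact hne (by rw [hleaf w hw, Set.mem_singleton_iff])

variable [Fintype V]

theorem prod_pow_degree [DecidableEq V] {M : Type*} [CommMonoid M] (G : SimpleGraph V)
    [DecidableRel G.Adj] (f : V → M) :
    ∏ v, f v ^ G.degree v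
      = ∏ e ∈ G.edgeFinset, Sym2.lift ⟨fun a b => f a * f b, fun _ _ => mul_comm _ _⟩ e := by
  calc ∏ v, f v ^ G.degree v = ∏ v, ∏ d ∈ {d : G.Dart | d.fst = v}, f v := by
        simp only [Finset.prod_const, dart_fst_fiber_card_eq_degree]
    _ = ∏ d : G.Dart, f d.fst := Finset.prod_fiberwise' _ _ _
    _ = ∏ e ∈ G.edgeFinset, ∏ d ∈ {d : G.Dart | d.edge = e}, f d.fst :=
        (Finset.prod_fiberwise_of_maps_to (fun d _ => mem_edgeFinset.2 d.edge_mem) _).symm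
    _ = _ := by
        refine Finset.prod_congr rfl fun e he => ?_
        induction e using Sym2.ind with
        | _ a b =>
        let d : G.Dart := ⟨(a, b), mem_edgeFinset.1 he⟩
        rw [show s(a, b) = d.edge from rfl, d.edge_fiber, Finset.prod_pair d.symm_ne.symm]
        rfl

theorem IsAcyclic.exists_degree_eq_one_of_adj {G : SimpleGraph V} [DecidableRel G.Adj]
    (hG : G.IsAcyclic) {a b : V} (hab : G.Adj a b) : ∃ v, G.degree v = 1 := by
  have : Nonempty V := ⟨a⟩
  obtain ⟨u, v, p, hp, hmax⟩ := Walk.exists_isPath_forall_isPath_length_le_length G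
  have hnil : ¬p.Nil := fun hnil => by
    simpa [hnil.length_eq_zero] using hmax _ _ hab.toWalk hab.isPath_toWalk
  refine ⟨u, degree_eq_one_iff_existsUnique_adj.2 ⟨_, p.adj_snd hnil, fun w hw => ?_⟩⟩
  refine hG.eq_snd_of_adj_start hp hw (not_not.1 fun hwp => ?_)
  simpa using hmax _ _ (p.cons hw.symm) (hp.cons hwp)

theorem edgeFinset_deleteEdges_singleton [DecidableEq V] (G : SimpleGraph V) [DecidableRel G.Adj]
    (e : Sym2 V) : (G.deleteEdges {e}).edgeFinset = G.edgeFinset.erase e := by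
  ext e'
  simp [and_comm]

end SimpleGraph

section TreeFactorized

variable {V : Type*} {X : V → Type*}

noncomputable def beliefRatio (b1 : (i : V) → X i → ℝ) (b2 : (i j : V) → X i → X j → ℝ)
    (i j : V) (s : X i) (t : X j) : ℝ :=
  b2 i j s t / (b1 i s * b1 j t)

variable {b1 : (i : V) → X i → ℝ} {b2 : (i j : V) → X i → X j → ℝ}

theorem beliefRatio_symm (hsym : ∀ i j s t, b2 i j s t = b2 j i t s) (i j : V) (s : X i)
    (t : X j) : beliefRatio b1 b2 i j s t = beliefRatio b1 b2 j i t s := by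
  rw [beliefRatio, beliefRatio, hsym, mul_comm (b1 i s)]

theorem mul_mul_beliefRatio (hb1 : ∀ i s, b1 i s ≠ 0) (i j : V) (s : X i) (t : X j) :
    b1 i s * b1 j t * beliefRatio b1 b2 i j s t = b2 i j s t :=
  mul_div_cancel₀ _ (mul_ne_zero (hb1 i s) (hb1 j t))

theorem mul_sum_mul_beliefRatio_mul {i j : V} [Fintype (X i)] (hb1 : ∀ i s, b1 i s ≠ 0) (t : X j)
    (c : X i → ℝ) :
    b1 j t * ∑ u, b1 i u * (beliefRatio b1 b2 i j u t * c u) = ∑ u, b2 i j u t * c u := by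
  rw [Finset.mul_sum]
  refine Finset.sum_congr rfl fun u _ => ?_
  rw [← mul_mul_beliefRatio (b2 := b2) hb1 i j u t]
  ring

variable [Fintype V] [DecidableEq V]

noncomputable def edgeRatioProd (F : SimpleGraph V) [DecidableRel F.Adj]
    (b1 : (i : V) → X i → ℝ) (b2 : (i j : V) → X i → X j → ℝ)
    (hsym : ∀ i j s t, b2 i j s t = b2 j i t s) (x : (i : V) → X i) : ℝ :=
  ∏ e ∈ F.edgeFinset, Sym2.lift ⟨fun i j => beliefRatio b1 b2 i j (x i) (x j),
    fun i j => beliefRatio_symm hsym i j (x i) (x j)⟩ e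

variable (hsym : ∀ i j s t, b2 i j s t = b2 j i t s) {F : SimpleGraph V} [DecidableRel F.Adj]

theorem treeFactorized_pos (hb1 : ∀ i s, 0 < b1 i s)
    (hb2 : ∀ i j, F.Adj i j → ∀ s t, 0 < b2 i j s t) (x : (i : V) → X i) : 0 < treeFactorized F b1 b2 hsym x := by
  refine mul_pos (Finset.prod_pos fun e he => ?_) (Finset.prod_pos fun i _ => zpow_pos (hb1 i _) _)
  induction e using Sym2.ind with
  | _ i j => exact hb2 i j (SimpleGraph.mem_edgeFinset.1 he) _ _

theorem treeFactorized_eq_prod_mul_edgeRatioProd (hb1 : ∀ i s, b1 i s ≠ 0) (x : (i : V) → X i) :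
    treeFactorized F b1 b2 hsym x = (∏ i, b1 i (x i)) * edgeRatioProd F b1 b2 hsym x := by
  have hpow : ∀ i, b1 i (x i) ^ ((1 : ℤ) - F.degree i) = b1 i (x i) / b1 i (x i) ^ F.degree i :=
    fun i => by rw [zpow_sub₀ (hb1 i (x i)), zpow_one, zpow_natCast]
  have hratio : ∀ e, Sym2.lift ⟨fun i j => beliefRatio b1 b2 i j (x i) (x j),
        fun i j => beliefRatio_symm hsym i j (x i) (x j)⟩ e
      = Sym2.lift ⟨fun i j => b2 i j (x i) (x j), fun i j => hsym i j (x i) (x j)⟩ e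
        / Sym2.lift ⟨fun i j => b1 i (x i) * b1 j (x j), fun _ _ => mul_comm _ _⟩ e :=
    Sym2.ind fun _ _ => rfl
  rw [treeFactorized, edgeRatioProd, Finset.prod_congr rfl fun e _ => hratio e,
    Finset.prod_div_distrib, Fintype.prod_congr _ _ hpow, Finset.prod_div_distrib,
    F.prod_pow_degree]
  ring

theorem edgeRatioProd_update_of_forall_not_adj {ℓ : V} (hℓ : ∀ w, ¬F.Adj ℓ w) (x : (i : V) → X i) (u : X ℓ) :
    edgeRatioProd F b1 b2 hsym (Function.update x ℓ u) = edgeRatioProd F b1 b2 hsym x := by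
  refine Finset.prod_congr rfl fun e he => ?_
  induction e using Sym2.ind with
  | _ i j =>
  have hij := SimpleGraph.mem_edgeFinset.1 he
  have hi : i ≠ ℓ := fun h => hℓ j (h ▸ hij)
  have hj : j ≠ ℓ := fun h => hℓ i (h ▸ hij.symm)
  simp only [Sym2.lift_mk, Function.update_of_ne hi, Function.update_of_ne hj]

theorem edgeRatioProd_eq_deleteEdges_mul {a b : V} (hab : F.Adj a b) (x : (i : V) → X i) :
    edgeRatioProd F b1 b2 hsym x = edgeRatioProd (F.deleteEdges {s(a, b)}) b1 b2 hsym x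
      * beliefRatio b1 b2 a b (x a) (x b) := by
  rw [edgeRatioProd, edgeRatioProd, F.edgeFinset_deleteEdges_singleton, ← Finset.prod_erase_mul _ _
    (SimpleGraph.mem_edgeFinset.2 (F.mem_edgeSet.2 hab)), Sym2.lift_mk]

end TreeFactorized

section Marginals

variable {V : Type*} [Fintype V] [DecidableEq V] {X : V → Type*} [∀ i, Fintype (X i)]

structure HasBeliefMarginals (μ : ((i : V) → X i) → ℝ) (F : SimpleGraph V)
    (b1 : (i : V) → X i → ℝ) (b2 : (i j : V) → X i → X j → ℝ) : Prop where
  sum_eq_one : ∑ x, μ x = 1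
  node : ∀ i (w : X i → ℝ), ∑ x, μ x * w (x i) = ∑ s, b1 i s * w s
  edge : ∀ i j, F.Adj i j → ∀ w : X i → X j → ℝ,
    ∑ x, μ x * w (x i) (x j) = ∑ s, ∑ t, b2 i j s t * w s t

variable {b1 : (i : V) → X i → ℝ} {b2 : (i j : V) → X i → X j → ℝ}
  (hsym : ∀ i j s t, b2 i j s t = b2 j i t s) {F : SimpleGraph V} [DecidableRel F.Adj]

theorem hasBeliefMarginals_treeFactorized_of_edgeFinset_eq_empty (hb1 : ∀ i s, b1 i s ≠ 0)
    (hb1sum : ∀ i, ∑ s, b1 i s = 1) (hF : F.edgeFinset = ∅) :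
    HasBeliefMarginals (treeFactorized F b1 b2 hsym) F b1 b2 := by
  have hμ : ∀ x, treeFactorized F b1 b2 hsym x = ∏ i, b1 i (x i) := fun x => by
    rw [treeFactorized_eq_prod_mul_edgeRatioProd hsym hb1, edgeRatioProd, hF, Finset.prod_empty,
      mul_one]
  have hsum : ∑ x : (i : V) → X i, ∏ i, b1 i (x i) = 1 := by
    rw [← Fintype.prod_sum, Fintype.prod_congr _ _ hb1sum, Finset.prod_const_one]
  refine ⟨by simp only [hμ, hsum], fun i w => ?_, fun i j hij => ?_⟩
  · simp only [hμ]
    rw [Fintype.sum_prod_mul_eq_sum_prod_mul_average i b1 (hb1sum i) (fun u _ => w u)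
      fun _ _ _ => rfl, ← Finset.sum_mul, hsum, one_mul]
  · simp [← SimpleGraph.mem_edgeSet, ← SimpleGraph.mem_edgeFinset, hF] at hij

variable {ℓ p : V}

theorem sum_treeFactorized_mul_eq_deleteEdges (hb1 : ∀ i s, b1 i s ≠ 0)
    (hb1ℓ : ∑ u, b1 ℓ u = 1) (hℓp : F.Adj ℓ p) (hleaf : ∀ w, F.Adj ℓ w → w = p)
    (ψ : X ℓ → ((i : V) → X i) → ℝ) (hψ : ∀ u x v, ψ u (Function.update x ℓ v) = ψ u x) :
    ∑ x, treeFactorized F b1 b2 hsym x * ψ (x ℓ) x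
      = ∑ x, treeFactorized (F.deleteEdges {s(ℓ, p)}) b1 b2 hsym x
          * ∑ u, b1 ℓ u * (beliefRatio b1 b2 ℓ p u (x p) * ψ u x) := by
  set F' := F.deleteEdges {s(ℓ, p)}
  have hinv : ∀ u x v, edgeRatioProd F' b1 b2 hsym (Function.update x ℓ v)
      * (beliefRatio b1 b2 ℓ p u (Function.update x ℓ v p) * ψ u (Function.update x ℓ v))
      = edgeRatioProd F' b1 b2 hsym x * (beliefRatio b1 b2 ℓ p u (x p) * ψ u x) := by
    intro u x v
    rw [edgeRatioProd_update_of_forall_not_adj hsym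
      (SimpleGraph.not_deleteEdges_adj_of_forall_adj_eq hleaf), Function.update_of_ne hℓp.ne', hψ]
  simp only [treeFactorized_eq_prod_mul_edgeRatioProd hsym hb1,
    edgeRatioProd_eq_deleteEdges_mul hsym hℓp]
  calc ∑ x, (∏ i, b1 i (x i)) * (edgeRatioProd F' b1 b2 hsym x
          * beliefRatio b1 b2 ℓ p (x ℓ) (x p)) * ψ (x ℓ) x
      = ∑ x, (∏ i, b1 i (x i)) * (edgeRatioProd F' b1 b2 hsym x
          * (beliefRatio b1 b2 ℓ p (x ℓ) (x p) * ψ (x ℓ) x)) :=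
        Finset.sum_congr rfl fun x _ => by ring
    _ = ∑ x, (∏ i, b1 i (x i)) * ∑ u, b1 ℓ u * (edgeRatioProd F' b1 b2 hsym x
          * (beliefRatio b1 b2 ℓ p u (x p) * ψ u x)) :=
        Fintype.sum_prod_mul_eq_sum_prod_mul_average ℓ b1 hb1ℓ
          (fun u x => edgeRatioProd F' b1 b2 hsym x * (beliefRatio b1 b2 ℓ p u (x p) * ψ u x)) hinv
    _ = _ := Finset.sum_congr rfl fun x _ => by
        rw [Finset.mul_sum, Finset.mul_sum]
        exact Finset.sum_congr rfl fun u _ => by ring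

theorem sum_treeFactorized_mul_eq_deleteEdges_of_invariant (hb1 : ∀ i s, b1 i s ≠ 0)
    (hb1ℓ : ∑ u, b1 ℓ u = 1) (hb2ℓp : ∀ t, ∑ u, b2 ℓ p u t = b1 p t) (hℓp : F.Adj ℓ p)
    (hleaf : ∀ w, F.Adj ℓ w → w = p) (φ : ((i : V) → X i) → ℝ)
    (hφ : ∀ x v, φ (Function.update x ℓ v) = φ x) :
    ∑ x, treeFactorized F b1 b2 hsym x * φ x
      = ∑ x, treeFactorized (F.deleteEdges {s(ℓ, p)}) b1 b2 hsym x * φ x := by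
  rw [sum_treeFactorized_mul_eq_deleteEdges hsym hb1 hb1ℓ hℓp hleaf (fun _ x => φ x)
    fun _ => hφ]
  refine Finset.sum_congr rfl fun x _ => congrArg _ ?_
  apply mul_left_cancel₀ (hb1 p (x p))
  rw [mul_sum_mul_beliefRatio_mul hb1 (x p) fun _ => φ x, ← Finset.sum_mul, hb2ℓp]

theorem sum_treeFactorized_mul_leaf_edge (hb1 : ∀ i s, b1 i s ≠ 0) (hb1ℓ : ∑ u, b1 ℓ u = 1)
    (hℓp : F.Adj ℓ p) (hleaf : ∀ w, F.Adj ℓ w → w = p)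
    (hnode : ∀ w : X p → ℝ, ∑ x, treeFactorized (F.deleteEdges {s(ℓ, p)}) b1 b2 hsym x * w (x p)
      = ∑ t, b1 p t * w t)
    (w : X ℓ → X p → ℝ) :
    ∑ x, treeFactorized F b1 b2 hsym x * w (x ℓ) (x p) = ∑ s, ∑ t, b2 ℓ p s t * w s t := by
  rw [sum_treeFactorized_mul_eq_deleteEdges hsym hb1 hb1ℓ hℓp hleaf (fun u x => w u (x p))
      fun _ _ _ => by rw [Function.update_of_ne hℓp.ne'],
    hnode fun t => ∑ u, b1 ℓ u * (beliefRatio b1 b2 ℓ p u t * w u t)]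
  simp_rw [mul_sum_mul_beliefRatio_mul hb1]
  exact Finset.sum_comm

theorem HasBeliefMarginals.of_deleteEdges_leaf (hb1 : ∀ i s, b1 i s ≠ 0)
    (hb1sum : ∀ i, ∑ s, b1 i s = 1) (hℓp : F.Adj ℓ p) (hleaf : ∀ w, F.Adj ℓ w → w = p)
    (hb2ℓ : ∀ s, ∑ t, b2 ℓ p s t = b1 ℓ s) (hb2p : ∀ t, ∑ s, b2 ℓ p s t = b1 p t)
    (h : HasBeliefMarginals (treeFactorized (F.deleteEdges {s(ℓ, p)}) b1 b2 hsym)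
      (F.deleteEdges {s(ℓ, p)}) b1 b2) :
    HasBeliefMarginals (treeFactorized F b1 b2 hsym) F b1 b2 := by
  have hrest := sum_treeFactorized_mul_eq_deleteEdges_of_invariant hsym hb1 (hb1sum ℓ) hb2p hℓp
    hleaf
  have hedge := sum_treeFactorized_mul_leaf_edge hsym hb1 (hb1sum ℓ) hℓp hleaf (h.node p)
  have hiso := SimpleGraph.not_deleteEdges_adj_of_forall_adj_eq hleaf
  refine ⟨?_, fun i w => ?_, fun i j hij w => ?_⟩
  · simpa only [mul_one, h.sum_eq_one] using hrest (fun _ => 1) fun _ _ => rfl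
  · by_cases hi : i = ℓ
    · subst hi
      rw [hedge fun s _ => w s]
      simp_rw [← Finset.sum_mul, hb2ℓ]
    · rw [hrest (fun x => w (x i)) fun x v => by rw [Function.update_of_ne hi], h.node]
  · by_cases hij' : (F.deleteEdges {s(ℓ, p)}).Adj i j
    · have hi : i ≠ ℓ := by rintro rfl; exact hiso j hij'
      have hj : j ≠ ℓ := by rintro rfl; exact hiso i hij'.symm
      rw [hrest (fun x => w (x i) (x j)) fun x v => by
        rw [Function.update_of_ne hi, Function.update_of_ne hj], h.edge i j hij']
    · rw [SimpleGraph.deleteEdges_adj, not_and, not_not, Set.mem_singleton_iff] at hij'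
      rcases Sym2.eq_iff.1 (hij' hij) with ⟨rfl, rfl⟩ | ⟨rfl, rfl⟩
      · exact hedge w
      · rw [hedge fun s t => w t s, Finset.sum_comm]
        simp_rw [hsym]

theorem hasBeliefMarginals_treeFactorized (hb1 : ∀ i s, b1 i s ≠ 0)
    (hb1sum : ∀ i, ∑ s, b1 i s = 1) (hF : F.IsAcyclic)
    (hb2 : ∀ i j, F.Adj i j → ∀ s, ∑ t, b2 i j s t = b1 i s) :
    HasBeliefMarginals (treeFactorized F b1 b2 hsym) F b1 b2 := by
  induction hn : #F.edgeFinset generalizing F with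
  | zero =>
    exact hasBeliefMarginals_treeFactorized_of_edgeFinset_eq_empty hsym hb1 hb1sum
      (Finset.card_eq_zero.1 hn)
  | succ n ih =>
    obtain ⟨a, b, hab⟩ := SimpleGraph.ne_bot_iff_exists_adj.1
      (SimpleGraph.edgeFinset_nonempty.1 (Finset.card_pos.1 (by rw [hn]; exact n.succ_pos)))
    obtain ⟨ℓ, hℓ⟩ := hF.exists_degree_eq_one_of_adj hab
    obtain ⟨p, hℓp, hleaf⟩ := SimpleGraph.degree_eq_one_iff_existsUnique_adj.1 hℓ
    have hle : F.deleteEdges {s(ℓ, p)} ≤ F := SimpleGraph.deleteEdges_le _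
    refine HasBeliefMarginals.of_deleteEdges_leaf hsym hb1 hb1sum hℓp hleaf (hb2 ℓ p hℓp)
      (fun t => by simpa only [hsym ℓ p] using hb2 p ℓ hℓp.symm t)
      (ih (hF.anti hle) (fun i j hij => hb2 i j (hle hij)) ?_)
    rw [F.edgeFinset_deleteEdges_singleton, Finset.card_erase_of_mem
      (SimpleGraph.mem_edgeFinset.2 (F.mem_edgeSet.2 hℓp)), hn, Nat.add_sub_cancel]

end Marginals

theorem treeFactorized_marginals_general (V : Type*) [Fintype V] [DecidableEq V]
    (X : V → Type*) [∀ i, Fintype (X i)] [∀ i, DecidableEq (X i)]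
    (T : SimpleGraph V) [DecidableRel T.Adj] (hT : T.IsTree)
    (b1 : (i : V) → X i → ℝ) (b2 : (i j : V) → X i → X j → ℝ)
    (hb1pos : ∀ i s, 0 < b1 i s) (hb1sum : ∀ i, ∑ s, b1 i s = 1)
    (hsym : ∀ i j s t, b2 i j s t = b2 j i t s)
    (hb2pos : ∀ i j, T.Adj i j → ∀ s t, 0 < b2 i j s t)
    (hmarg : ∀ i j, T.Adj i j → ∀ s : X i, ∑ t : X j, b2 i j s t = b1 i s) :
    (∀ x, 0 < treeFactorized T b1 b2 hsym x) ∧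
      (∑ x : (i : V) → X i, treeFactorized T b1 b2 hsym x = 1) ∧
      (∀ i : V, ∀ s : X i,
        ∑ x ∈ Finset.univ.filter (fun x : (i : V) → X i => x i = s),
          treeFactorized T b1 b2 hsym x = b1 i s) ∧
      (∀ i j : V, T.Adj i j → ∀ (s : X i) (t : X j),
        ∑ x ∈ Finset.univ.filter (fun x : (i : V) → X i => x i = s ∧ x j = t),
          treeFactorized T b1 b2 hsym x = b2 i j s t) := by
  have hM := hasBeliefMarginals_treeFactorized hsym (fun i s => (hb1pos i s).ne') hb1sum
    hT.isAcyclic hmarg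
  refine ⟨treeFactorized_pos hsym hb1pos hb2pos, hM.sum_eq_one, fun i s => ?_,
    fun i j hij s t => ?_⟩
  · simpa [Finset.sum_filter] using hM.node i fun u => if u = s then 1 else 0
  · simpa [Finset.sum_filter, ite_and] using
      hM.edge i j hij fun u v => if u = s then if v = t then 1 else 0 else 0

/-- **Tree-factorized distribution of a consistent belief system.**
Given a consistent belief system on a tree `T` (strictly positive normalized
node beliefs `b1`, strictly positive normalized symmetric pairwise beliefs
`b2` on the edges, consistent with the node beliefs), the tree-factorized
distribution `b(x) = (Π_{{i,j}∈E(T)} b_{ij}(x_i,x_j)) · Π_i b_i(x_i)^{1-deg i}`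
is a strictly positive probability mass function whose single-variable
marginals are the node beliefs and whose pairwise marginals on the edges are
the edge beliefs. -/
theorem treeFactorized_marginals (V : Type*) [Fintype V] [DecidableEq V] [Nonempty V]
    (X : V → Type*) [∀ i, Fintype (X i)] [∀ i, Nonempty (X i)] [∀ i, DecidableEq (X i)]
    (T : SimpleGraph V) [DecidableRel T.Adj] (hT : T.IsTree)
    (b1 : (i : V) → X i → ℝ) (b2 : (i j : V) → X i → X j → ℝ)
    (hb1pos : ∀ i s, 0 < b1 i s) (hb1sum : ∀ i, ∑ s, b1 i s = 1)
    (hsym : ∀ i j s t, b2 i j s t = b2 j i t s)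
    (hb2pos : ∀ i j, T.Adj i j → ∀ s t, 0 < b2 i j s t)
    (hb2sum : ∀ i j, T.Adj i j → ∑ s : X i, ∑ t : X j, b2 i j s t = 1)
    (hmarg : ∀ i j, T.Adj i j → ∀ s : X i, ∑ t : X j, b2 i j s t = b1 i s) :
    (∀ x, 0 < treeFactorized T b1 b2 hsym x) ∧
      (∑ x : (i : V) → X i, treeFactorized T b1 b2 hsym x = 1) ∧
      (∀ i : V, ∀ s : X i,
        ∑ x ∈ Finset.univ.filter (fun x : (i : V) → X i => x i = s),
          treeFactorized T b1 b2 hsym x = b1 i s) ∧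
      (∀ i j : V, T.Adj i j → ∀ (s : X i) (t : X j),
        ∑ x ∈ Finset.univ.filter (fun x : (i : V) → X i => x i = s ∧ x j = t),
          treeFactorized T b1 b2 hsym x = b2 i j s t) :=
  treeFactorized_marginals_general V X T hT b1 b2 hb1pos hb1sum hsym hb2pos hmarg
end

section
/- Let p(x) = p̃(x)/Z be the pairwise Markov random field on the tree T, where p̃(x) = ∏_{{i,j}∈E(T)} ψ_{ij}(x_i, x_j) and Z = Σ_x p̃(x), and let p_i and p_{ij} denote its single-variable and edge pairwise marginals. Then p factorizes in terms of its marginals according to the tree: p(x) = ( ∏_{{i,j}∈E(T)} p_{ij}(x_i, x_j) ) · ∏_{i∈V} p_i(x_i)^{1 - deg(i)} for every x. -/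
/-!
Absorbing `1/Z` into a vertex potential, `p` is a positive pairwise Markov random field on `T`
(with edge potentials `ψ_{ij}` and vertex potentials `φ_i`), and the formula is proved for all
such fields by removing a leaf `ℓ` with neighbour `u`. Summing out `x_ℓ` turns the factor
`ψ_{uℓ}(x_u, x_ℓ) φ_ℓ(x_ℓ)` into a vertex potential at `u`, so the marginal `q` of `p` on `V ∖ {ℓ}`
is a positive pairwise field on `T - ℓ`, with the same one- and two-variable marginals as `p`.
As `x_ℓ` interacts only with `x_u`, `p(x) = q(x_{-ℓ}) p_{uℓ}(x_u, x_ℓ) / p_u(x_u)`; removing `ℓ`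
lowers `deg u` by one, which accounts for the extra factor `p_u` in the denominator.
-/

open Finset

variable {V : Type*} [Fintype V] [DecidableEq V]
  {X : V → Type*} [∀ i, Fintype (X i)] [∀ i, DecidableEq (X i)]

/-- The single-variable marginal `p_i(s) = Σ_{x : x_i = s} p(x)`. -/
noncomputable def marg1 (p : ((i : V) → X i) → ℝ) (i : V) (s : X i) : ℝ :=
  ∑ x ∈ Finset.univ.filter (fun x : (i : V) → X i => x i = s), p x

/-- The pairwise marginal `p_{ij}(s,t) = Σ_{x : x_i = s, x_j = t} p(x)`. -/
noncomputable def marg2 (p : ((i : V) → X i) → ℝ) (i j : V) (s : X i) (t : X j) : ℝ :=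
  ∑ x ∈ Finset.univ.filter (fun x : (i : V) → X i => x i = s ∧ x j = t), p x

theorem marg2_symm (p : ((i : V) → X i) → ℝ) (i j : V) (s : X i) (t : X j) :
    marg2 p i j s t = marg2 p j i t s := by
  unfold marg2
  exact Finset.sum_congr (by ext x; simp [and_comm]) fun _ _ => rfl


namespace SimpleGraph

variable (G : SimpleGraph V)

abbrev deleteVert (v : V) : SimpleGraph {w // w ≠ v} :=
  G.comap (Function.Embedding.subtype _)

variable {G}

omit [DecidableEq V] in
theorem IsTree.deleteVert_of_degree_eq_one [DecidableRel G.Adj] (hG : G.IsTree)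
    {v : V} (hv : G.degree v = 1) : (G.deleteVert v).IsTree :=
  ⟨hG.connected.induce_compl_singleton_of_degree_eq_one hv, hG.isAcyclic.induce _⟩

variable [DecidableRel G.Adj]

theorem degree_deleteVert_add {v : V} (w : {w // w ≠ v}) :
    (G.deleteVert v).degree w + (if G.Adj w v then 1 else 0) = G.degree w := by
  rw [← card_neighborFinset_eq_degree, ← card_neighborFinset_eq_degree,
    ← card_filter_add_card_filter_not (· ≠ v)]
  congr 1
  · refine card_bij (fun a _ => a.1) (fun a ha => ?_) (fun _ _ _ _ => Subtype.ext)
      (fun b hb => ?_)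
    · simpa [a.2] using ha
    · simp only [mem_filter, mem_neighborFinset] at hb
      exact ⟨⟨b, hb.2⟩, by simpa using hb.1, rfl⟩
  · simp only [ne_eq, not_not, filter_eq', mem_neighborFinset]
    split_ifs <;> rfl

theorem degree_deleteVert_add_of_degree_eq_one {v : V} {u : {w // w ≠ v}}
    (hv : G.degree v = 1) (hu : G.Adj v u) (w : {w // w ≠ v}) :
    (G.deleteVert v).degree w + (if w = u then 1 else 0) = G.degree w := by
  obtain ⟨u', -, hu'⟩ := degree_eq_one_iff_existsUnique_adj.mp hv
  have hadj : G.Adj w v ↔ w = u := by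
    rw [G.adj_comm, Subtype.ext_iff]
    exact ⟨fun h => (hu' _ h).trans (hu' _ hu).symm, fun h => h ▸ hu⟩
  simpa only [hadj] using G.degree_deleteVert_add w

theorem map_edgeFinset_deleteVert (v : V) :
    (G.deleteVert v).edgeFinset.map (Function.Embedding.subtype _).sym2Map =
      {e ∈ G.edgeFinset | v ∉ e} := by
  aesop (add simp [Finset.ext_iff, Sym2.exists, Sym2.forall, adj_comm])

theorem prod_edgeFinset_eq_prod_incidenceFinset_mul {M : Type*} [CommMonoid M] (v : V)
    (F : Sym2 V → M) :
    ∏ e ∈ G.edgeFinset, F e =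
      (∏ e ∈ G.incidenceFinset v, F e) *
        ∏ e ∈ (G.deleteVert v).edgeFinset, F (e.map Subtype.val) := by
  rw [← prod_filter_mul_prod_filter_not G.edgeFinset (v ∈ ·), incidenceFinset_eq_filter,
    ← map_edgeFinset_deleteVert, prod_map]
  rfl

theorem incidenceFinset_eq_singleton_of_degree_eq_one {v w : V} (hv : G.degree v = 1)
    (hw : G.Adj v w) : G.incidenceFinset v = {s(v, w)} := by
  obtain ⟨e, he⟩ := card_eq_one.mp ((G.card_incidenceFinset_eq_degree v).trans hv)
  have hmem : s(v, w) ∈ G.incidenceFinset v :=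
    (G.mem_incidenceFinset _ _).mpr ⟨hw, Sym2.mem_mk_left _ _⟩
  rw [he, mem_singleton] at hmem
  rw [he, hmem]

end SimpleGraph

namespace Equiv

variable {α : Type*} [DecidableEq α] {β : α → Type*} (i : α) (b : β i)
  (f : ∀ j : {j // j ≠ i}, β j)

theorem piSplitAt_symm_apply_self : (piSplitAt i β).symm (b, f) i = b := by
  simp [piSplitAt_symm_apply]

theorem piSplitAt_symm_apply_val (j : {j // j ≠ i}) :
    (piSplitAt i β).symm (b, f) j = f j := by
  simp [piSplitAt_symm_apply, j.2]

end Equiv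

noncomputable def sumOut (ℓ : V) (p : ((i : V) → X i) → ℝ) (y : ∀ j : {j // j ≠ ℓ}, X j) :
    ℝ :=
  ∑ t : X ℓ, p ((Equiv.piSplitAt ℓ X).symm (t, y))

section SumOut

variable (ℓ : V) (p : ((i : V) → X i) → ℝ)

omit [∀ i, DecidableEq (X i)] in
theorem sum_sumOut : ∑ y, sumOut ℓ p y = ∑ x, p x := by
  rw [← (Equiv.piSplitAt ℓ X).symm.sum_comp, Fintype.sum_prod_type_right]
  rfl

omit [∀ i, DecidableEq (X i)] in
theorem sum_filter_sumOut (P : (∀ j : {j // j ≠ ℓ}, X j) → Prop) [DecidablePred P] :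
    ∑ y with P y, sumOut ℓ p y = ∑ x with P (fun j => x j), p x := by
  rw [sum_filter, sum_filter, ← sum_sumOut ℓ]
  simp only [sumOut, Equiv.piSplitAt_symm_apply_val, sum_ite_irrel, sum_const_zero]

theorem marg1_sumOut (j : {j // j ≠ ℓ}) (s : X j) : marg1 (sumOut ℓ p) j s = marg1 p j s :=
  sum_filter_sumOut ℓ p (fun y => y j = s)

theorem marg2_sumOut (i j : {j // j ≠ ℓ}) (s : X i) (t : X j) :
    marg2 (sumOut ℓ p) i j s t = marg2 p i j s t :=
  sum_filter_sumOut ℓ p (fun y => y i = s ∧ y j = t)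

omit [Fintype V] [∀ i, DecidableEq (X i)] in
theorem sumOut_pos [Nonempty (X ℓ)] (hp : ∀ x, 0 < p x) (y : ∀ j : {j // j ≠ ℓ}, X j) :
    0 < sumOut ℓ p y :=
  sum_pos (fun _ _ => hp _) univ_nonempty

variable {ℓ p} {u : {j // j ≠ ℓ}} {g : X u → X ℓ → ℝ} {R : (∀ j : {j // j ≠ ℓ}, X j) → ℝ}

omit [Fintype V] [∀ i, DecidableEq (X i)] in
theorem sumOut_eq_of_eq_mul (hp : ∀ x, p x = g (x u) (x ℓ) * R (fun j => x j)) (y) :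
    sumOut ℓ p y = (∑ t, g (y u) t) * R y := by
  simp only [sumOut, hp, Equiv.piSplitAt_symm_apply_val, Equiv.piSplitAt_symm_apply_self,
    sum_mul]

/-- The conditional law of `x ℓ` given the other coordinates only depends on `x u`, hence equals
`p_{uℓ}(x_u, x_ℓ) / p_u(x_u)`. -/
theorem mul_marg1_eq_sumOut_mul_marg2 (hp : ∀ x, p x = g (x u) (x ℓ) * R (fun j => x j)) (x) :
    p x * marg1 p u (x u) = sumOut ℓ p (fun j => x j) * marg2 p u ℓ (x u) (x ℓ) := by
  have h1 : ∀ a, marg1 p u a = (∑ t, g a t) * ∑ y with y u = a, R y := by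
    intro a
    rw [marg1, ← sum_filter_sumOut ℓ p (fun y => y u = a), mul_sum]
    refine sum_congr rfl fun y hy => ?_
    rw [sumOut_eq_of_eq_mul hp, (mem_filter.mp hy).2]
  have h2 : ∀ a b, marg2 p u ℓ a b = g a b * ∑ y with y u = a, R y := by
    intro a b
    rw [marg2, sum_filter, ← sum_sumOut ℓ, sum_filter, mul_sum]
    refine sum_congr rfl fun y _ => ?_
    simp only [sumOut, hp, Equiv.piSplitAt_symm_apply_val, Equiv.piSplitAt_symm_apply_self,
      ite_and]
    by_cases h : y u = a <;> simp [h]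
  rw [h1, h2, sumOut_eq_of_eq_mul hp, hp]
  ring

end SumOut

noncomputable def pairwiseWeight (G : SimpleGraph V) [DecidableRel G.Adj]
    (ψ : ∀ i j, X i → X j → ℝ) (hψ : ∀ i j s t, ψ i j s t = ψ j i t s) (φ : ∀ i, X i → ℝ)
    (x : ∀ i, X i) : ℝ :=
  (∏ e ∈ G.edgeFinset, Sym2.lift ⟨fun i j => ψ i j (x i) (x j), fun i j => hψ i j _ _⟩ e) *
    ∏ i, φ i (x i)

def IsPairwiseMRF (G : SimpleGraph V) [DecidableRel G.Adj] (p : (∀ i, X i) → ℝ) : Prop :=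
  ∃ ψ hψ φ, p = pairwiseWeight G ψ hψ φ

section PairwiseMRF

variable {G : SimpleGraph V} [DecidableRel G.Adj] {ψ : ∀ i j, X i → X j → ℝ}
  {hψ : ∀ i j s t, ψ i j s t = ψ j i t s} {φ : ∀ i, X i → ℝ}

omit [∀ i, Fintype (X i)] [∀ i, DecidableEq (X i)] in
theorem pairwiseWeight_update_mul (v : V) (h : X v → ℝ) (x : ∀ i, X i) :
    pairwiseWeight G ψ hψ (Function.update φ v fun s => h s * φ v s) x =
      h (x v) * pairwiseWeight G ψ hψ φ x := by
  have hne (j : {j // j ≠ v}) :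
      Function.update φ v (fun s => h s * φ v s) j (x j) = φ j (x j) := by
    rw [Function.update_of_ne j.2]
  simp only [pairwiseWeight, Fintype.prod_eq_mul_prod_subtype_ne _ v, Function.update_self, hne]
  ring

omit [∀ i, Fintype (X i)] [∀ i, DecidableEq (X i)] in
theorem IsPairwiseMRF.mul_apply {p : (∀ i, X i) → ℝ} (hp : IsPairwiseMRF G p) (v : V)
    (h : X v → ℝ) : IsPairwiseMRF G fun x => h (x v) * p x := by
  obtain ⟨ψ, hψ, φ, rfl⟩ := hp
  exact ⟨ψ, hψ, _, funext fun x => (pairwiseWeight_update_mul v h x).symm⟩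

omit [∀ i, Fintype (X i)] [∀ i, DecidableEq (X i)] in
theorem pairwiseWeight_eq_mul_of_degree_eq_one {ℓ : V} {u : {j // j ≠ ℓ}}
    (hℓ : G.degree ℓ = 1) (hu : G.Adj ℓ u) (x : ∀ i, X i) :
    pairwiseWeight G ψ hψ φ x = ψ u ℓ (x u) (x ℓ) * φ ℓ (x ℓ) *
      pairwiseWeight (G.deleteVert ℓ) (fun i j => ψ i j) (fun i j => hψ i j) (fun j => φ j)
        (fun j => x j) := by
  simp only [pairwiseWeight, G.prod_edgeFinset_eq_prod_incidenceFinset_mul ℓ,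
    G.incidenceFinset_eq_singleton_of_degree_eq_one hℓ hu, prod_singleton, Sym2.lift_mk,
    Sym2.lift_map_apply, Fintype.prod_eq_mul_prod_subtype_ne _ ℓ, hψ ℓ]
  ring

omit [∀ i, Fintype (X i)] [∀ i, DecidableEq (X i)] in
theorem IsPairwiseMRF.exists_eq_mul_of_degree_eq_one {p : (∀ i, X i) → ℝ}
    (hp : IsPairwiseMRF G p) {ℓ : V} {u : {j // j ≠ ℓ}} (hℓ : G.degree ℓ = 1)
    (hu : G.Adj ℓ u) : ∃ (g : X u → X ℓ → ℝ) (R : (∀ j : {j // j ≠ ℓ}, X j) → ℝ),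
      IsPairwiseMRF (G.deleteVert ℓ) R ∧ ∀ x, p x = g (x u) (x ℓ) * R (fun j => x j) := by
  obtain ⟨ψ, hψ, φ, rfl⟩ := hp
  exact ⟨fun a b => ψ u ℓ a b * φ ℓ b, _, ⟨_, _, _, rfl⟩,
    pairwiseWeight_eq_mul_of_degree_eq_one hℓ hu⟩

end PairwiseMRF

omit [∀ i, DecidableEq (X i)] in
theorem IsPairwiseMRF.sumOut_of_eq_mul {ℓ : V} {H : SimpleGraph {j // j ≠ ℓ}}
    [DecidableRel H.Adj] {p : (∀ i, X i) → ℝ} {u : {j // j ≠ ℓ}} {g : X u → X ℓ → ℝ}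
    {R : (∀ j : {j // j ≠ ℓ}, X j) → ℝ} (hR : IsPairwiseMRF H R)
    (hp : ∀ x, p x = g (x u) (x ℓ) * R (fun j => x j)) : IsPairwiseMRF H (sumOut ℓ p) := by
  rw [funext (sumOut_eq_of_eq_mul hp)]
  exact hR.mul_apply u fun a => ∑ t, g a t

noncomputable def betheProduct (G : SimpleGraph V) [DecidableRel G.Adj] (p : (∀ i, X i) → ℝ)
    (x : ∀ i, X i) : ℝ :=
  (∏ e ∈ G.edgeFinset, Sym2.lift ⟨fun i j => marg2 p i j (x i) (x j),
      fun i j => marg2_symm p i j (x i) (x j)⟩ e) *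
    ∏ i, marg1 p i (x i) ^ ((1 : ℤ) - G.degree i)

theorem betheProduct_mul_marg1_of_degree_eq_one {G : SimpleGraph V} [DecidableRel G.Adj]
    {p : (∀ i, X i) → ℝ} {ℓ : V} {u : {j // j ≠ ℓ}} (hℓ : G.degree ℓ = 1) (hu : G.Adj ℓ u)
    {x : ∀ i, X i} (hx : ∀ i, marg1 p i (x i) ≠ 0) :
    betheProduct G p x * marg1 p u (x u) =
      marg2 p u ℓ (x u) (x ℓ) * betheProduct (G.deleteVert ℓ) (sumOut ℓ p) (fun j => x j) := by
  have hdeg (j : {j // j ≠ ℓ}) :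
      (1 - (G.deleteVert ℓ).degree j : ℤ) = 1 - G.degree j + if j = u then 1 else 0 := by
    have := G.degree_deleteVert_add_of_degree_eq_one hℓ hu j
    split_ifs at this ⊢ <;> omega
  have hpow_u : ∏ j : {j // j ≠ ℓ}, marg1 p j (x j) ^ (if j = u then 1 else 0 : ℤ) =
      marg1 p u (x u) := by
    simp [apply_ite]
  simp only [betheProduct, G.prod_edgeFinset_eq_prod_incidenceFinset_mul ℓ,
    G.incidenceFinset_eq_singleton_of_degree_eq_one hℓ hu, prod_singleton, Sym2.lift_mk,
    Sym2.lift_map_apply, Fintype.prod_eq_mul_prod_subtype_ne _ ℓ, marg2_sumOut, marg1_sumOut,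
    hdeg, hℓ]
  rw [prod_congr rfl fun (j : {j // j ≠ ℓ}) _ => zpow_add₀ (hx j) _ _, prod_mul_distrib, hpow_u,
    marg2_symm p ℓ]
  simp only [Nat.cast_one, sub_self, zpow_zero, one_mul]
  ring

theorem marg1_apply_eq_of_subsingleton [Subsingleton V] (p : (∀ i, X i) → ℝ) (i : V)
    (x : ∀ i, X i) : marg1 p i (x i) = p x := by
  rw [marg1, Finset.sum_eq_single_of_mem x (by simp)]
  intro y hy hyx
  refine absurd (funext fun j => ?_) hyx
  obtain rfl := Subsingleton.elim i j
  exact (mem_filter.mp hy).2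

theorem betheProduct_of_subsingleton [Subsingleton V] {T : SimpleGraph V} [DecidableRel T.Adj]
    (hT : T.IsTree) (p : (∀ i, X i) → ℝ) (x : ∀ i, X i) : betheProduct T p x = p x := by
  have : Unique V := ⟨⟨hT.connected.nonempty.some⟩, fun _ => Subsingleton.elim _ _⟩
  have hE : T.edgeFinset = ∅ := by
    have := hT.card_edgeFinset
    rw [Fintype.card_unique] at this
    exact card_eq_zero.mp (by omega)
  simp [betheProduct, hE, marg1_apply_eq_of_subsingleton]

theorem marg1_apply_pos {p : (∀ i, X i) → ℝ} (hpos : ∀ x, 0 < p x) (i : V) (x : ∀ i, X i) :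
    0 < marg1 p i (x i) :=
  sum_pos (fun y _ => hpos y) ⟨x, by simp⟩

theorem IsPairwiseMRF.eq_betheProduct_of_isTree {T : SimpleGraph V} [DecidableRel T.Adj]
    (hT : T.IsTree) {p : (∀ i, X i) → ℝ} (hp : IsPairwiseMRF T p) (hpos : ∀ x, 0 < p x)
    (x : ∀ i, X i) : p x = betheProduct T p x := by
  induction hn : Fintype.card V using Nat.strong_induction_on generalizing V with
  | _ n ih =>
    rcases subsingleton_or_nontrivial V with _ | _
    · exact (betheProduct_of_subsingleton hT p x).symm
    obtain ⟨ℓ, hℓ⟩ := hT.exists_vert_degree_one_of_nontrivial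
    obtain ⟨u, hu, -⟩ := SimpleGraph.degree_eq_one_iff_existsUnique_adj.mp hℓ
    lift u to {j // j ≠ ℓ} using hu.ne.symm
    obtain ⟨g, R, hR, hfac⟩ := hp.exists_eq_mul_of_degree_eq_one hℓ hu
    have : Nonempty (X ℓ) := ⟨x ℓ⟩
    have hcard : Fintype.card {j // j ≠ ℓ} < n :=
      hn ▸ Fintype.card_subtype_lt (not_not.mpr rfl)
    have hq := ih _ hcard (hT.deleteVert_of_degree_eq_one hℓ) (hR.sumOut_of_eq_mul hfac)
      (sumOut_pos ℓ p hpos) (fun j => x j) rfl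
    have hx (i : V) : marg1 p i (x i) ≠ 0 := (marg1_apply_pos hpos i x).ne'
    apply mul_right_cancel₀ (hx u)
    rw [mul_marg1_eq_sumOut_mul_marg2 hfac, betheProduct_mul_marg1_of_degree_eq_one hℓ hu hx, hq,
      mul_comm]

theorem tree_mrf_factorizes_via_marginals_general (V : Type*) [Fintype V] [DecidableEq V]
    (X : V → Type*) [∀ i, Fintype (X i)] [∀ i, DecidableEq (X i)]
    (T : SimpleGraph V) [DecidableRel T.Adj] (hT : T.IsTree)
    (ψ2 : (i j : V) → X i → X j → ℝ)
    (hψsym : ∀ i j s t, ψ2 i j s t = ψ2 j i t s)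
    (hψpos : ∀ i j, T.Adj i j → ∀ s t, 0 < ψ2 i j s t)
    (ptil : ((i : V) → X i) → ℝ)
    (hptil : ∀ x, ptil x = ∏ e ∈ T.edgeFinset,
      Sym2.lift ⟨fun i j => ψ2 i j (x i) (x j), fun i j => hψsym i j (x i) (x j)⟩ e)
    (p : ((i : V) → X i) → ℝ)
    (hp : ∀ x, p x = ptil x / ∑ y : (i : V) → X i, ptil y) :
    ∀ x : (i : V) → X i,
      p x = (∏ e ∈ T.edgeFinset,
          Sym2.lift ⟨fun i j => marg2 p i j (x i) (x j),
            fun i j => marg2_symm p i j (x i) (x j)⟩ e)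
        * ∏ i : V, marg1 p i (x i) ^ ((1 : ℤ) - T.degree i) := by
  intro x
  obtain ⟨i₀⟩ := hT.connected.nonempty
  have hptil_pos (y : (i : V) → X i) : 0 < ptil y := by
    rw [hptil]
    refine prod_pos fun e he => ?_
    induction e with
    | _ a b => exact hψpos a b (SimpleGraph.mem_edgeFinset.mp he) _ _
  set Z := ∑ y, ptil y
  have hZ : 0 < Z := sum_pos (fun y _ => hptil_pos y) ⟨x, mem_univ x⟩
  have hMRF : IsPairwiseMRF T p :=
    ⟨ψ2, hψsym, fun i _ => if i = i₀ then Z⁻¹ else 1, funext fun y => by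
      simp [pairwiseWeight, hp, hptil, div_eq_mul_inv]⟩
  exact hMRF.eq_betheProduct_of_isTree hT (fun y => hp y ▸ div_pos (hptil_pos y) hZ) x

/-- **Tree factorization of a pairwise MRF on a tree.**
Let `p(x) = p̃(x)/Z` be the pairwise Markov random field on a tree `T`, where
`p̃(x) = Π_{{i,j}∈E(T)} ψ_{ij}(x_i, x_j)` with strictly positive symmetric edge
potentials and `Z = Σ_x p̃(x)`.  Then `p` factorizes in terms of its own
marginals according to the tree:
`p(x) = (Π_{{i,j}∈E(T)} p_{ij}(x_i,x_j)) · Π_i p_i(x_i)^{1 - deg(i)}`. -/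
theorem tree_mrf_factorizes_via_marginals (V : Type*) [Fintype V] [DecidableEq V] [Nonempty V]
    (X : V → Type*) [∀ i, Fintype (X i)] [∀ i, Nonempty (X i)] [∀ i, DecidableEq (X i)]
    (T : SimpleGraph V) [DecidableRel T.Adj] (hT : T.IsTree)
    (ψ2 : (i j : V) → X i → X j → ℝ)
    (hψsym : ∀ i j s t, ψ2 i j s t = ψ2 j i t s)
    (hψpos : ∀ i j, T.Adj i j → ∀ s t, 0 < ψ2 i j s t)
    (ptil : ((i : V) → X i) → ℝ)
    (hptil : ∀ x, ptil x = ∏ e ∈ T.edgeFinset,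
      Sym2.lift ⟨fun i j => ψ2 i j (x i) (x j), fun i j => hψsym i j (x i) (x j)⟩ e)
    (p : ((i : V) → X i) → ℝ)
    (hp : ∀ x, p x = ptil x / ∑ y : (i : V) → X i, ptil y) :
    ∀ x : (i : V) → X i,
      p x = (∏ e ∈ T.edgeFinset,
          Sym2.lift ⟨fun i j => marg2 p i j (x i) (x j),
            fun i j => marg2_symm p i j (x i) (x j)⟩ e)
        * ∏ i : V, marg1 p i (x i) ^ ((1 : ℤ) - T.degree i) :=
  tree_mrf_factorizes_via_marginals_general V X T hT ψ2 hψsym hψpos ptil hptil p hp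
end
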